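/- arXiv:2502.04021 — 5 statements merged into one kernel-verified Lean document; each statement's English description precedes it below -/
import Mathlib

section
/- Let μ : [0,1] → ℝ be 1-Lipschitz and let ε > 0. Define c*(μ) as the supremum over all sampling densities w ∈ W of the infimum, over all 1-Lipschitz functions λ : [0,1] → ℝ satisfying (sup_{x∈[0,1]} μ(x)) − (sup_{x∈[0,1]} λ(x)) > ε, of ∫₀¹ w(x)(μ(x) − λ(x))² dx. Then c*(μ) = ε². -/
/-!
Shifting `μ` down by a constant `c > ε` gives an admissible `λ` whose loss is `c²` for every
density, so `c*(μ) ≤ ε²`. Conversely, let `w` be uniform on an interval of length `δ` containing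
a maximiser `x₀` of `μ`. On that interval `μ ≥ μ x₀ - δ`, while `λ ≤ sup λ < μ x₀ - ε`, so every
admissible `λ` costs at least `(ε - δ)²`; letting `δ → 0` gives `c*(μ) ≥ ε²`.
-/

open MeasureTheory Set Filter Topology
open scoped ENNReal

section UniformDensity

variable {α : Type*} [MeasurableSpace α] (ν : Measure α) (s : Set α)

noncomputable def uniformDensity : α → ℝ := s.indicator fun _ => (ν.real s)⁻¹

variable {ν s}

lemma measurable_uniformDensity (hs : MeasurableSet s) : Measurable (uniformDensity ν s) :=
  measurable_const.indicator hs

lemma uniformDensity_nonneg (x : α) : 0 ≤ uniformDensity ν s x :=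
  indicator_nonneg (fun _ _ => inv_nonneg.mpr measureReal_nonneg) x

lemma setIntegral_uniformDensity_mul {t : Set α} (hs : MeasurableSet s) (hst : s ⊆ t)
    (g : α → ℝ) : ∫ x in t, uniformDensity ν s x * g x ∂ν = ⨍ x in s, g x ∂ν := by
  have hfun : (fun x => uniformDensity ν s x * g x) = s.indicator fun x => (ν.real s)⁻¹ * g x :=
    funext fun x => by by_cases hx : x ∈ s <;> simp [uniformDensity, hx]
  rw [hfun, setIntegral_indicator hs, inter_eq_self_of_subset_right hst, integral_const_mul,
    setAverage_eq, smul_eq_mul]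

lemma setIntegral_uniformDensity {t : Set α} (hs : MeasurableSet s) (hst : s ⊆ t)
    (hs₀ : ν s ≠ 0) (hs₁ : ν s ≠ ∞) : ∫ x in t, uniformDensity ν s x ∂ν = 1 := by
  simpa [setAverage_const hs₀ hs₁] using setIntegral_uniformDensity_mul (ν := ν) hs hst 1

lemma le_setIntegral_uniformDensity_mul {t : Set α} {g : α → ℝ} {c : ℝ} (hs : MeasurableSet s)
    (hst : s ⊆ t) (hs₀ : ν s ≠ 0) (hs₁ : ν s ≠ ∞) (hg : IntegrableOn g s ν)
    (hc : ∀ x ∈ s, c ≤ g x) : c ≤ ∫ x in t, uniformDensity ν s x * g x ∂ν := by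
  have hpos : 0 < ν.real s := ENNReal.toReal_pos hs₀ hs₁
  rw [setIntegral_uniformDensity_mul hs hst, setAverage_eq, smul_eq_mul, le_inv_mul_iff₀ hpos,
    mul_comm]
  exact setIntegral_ge_of_const_le_real hs hs₁ hc hg

end UniformDensity

lemma lipschitzOnWith_one_of_abs_sub_le {s : Set ℝ} {f : ℝ → ℝ}
    (hf : ∀ x ∈ s, ∀ y ∈ s, |f x - f y| ≤ |x - y|) : LipschitzOnWith 1 f s :=
  LipschitzOnWith.of_dist_le_mul fun x hx y hy => by simpa [Real.dist_eq] using hf x hx y hy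

lemma exists_Icc_add_subset_Icc_mem {p q x δ : ℝ} (hx : x ∈ Icc p q) (hδ₀ : 0 ≤ δ)
    (hδ : δ ≤ q - p) : ∃ a, Icc a (a + δ) ⊆ Icc p q ∧ x ∈ Icc a (a + δ) := by
  refine ⟨min x (q - δ), Icc_subset_Icc (le_min hx.1 (by linarith)) ?_, min_le_left _ _, ?_⟩
  · linarith [min_le_right x (q - δ)]
  · rcases min_cases x (q - δ) with ⟨h, -⟩ | ⟨h, -⟩ <;> rw [h] <;> linarith [hx.2]

noncomputable def admissibleLosses (μ : ℝ → ℝ) (ε : ℝ) (w : ℝ → ℝ) : Set ℝ :=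
  {d : ℝ | ∃ lam : ℝ → ℝ,
    (∀ x ∈ Icc (0:ℝ) 1, ∀ y ∈ Icc (0:ℝ) 1, |lam x - lam y| ≤ |x - y|) ∧
    sSup (μ '' Icc (0:ℝ) 1) - sSup (lam '' Icc (0:ℝ) 1) > ε ∧
    d = ∫ x in Icc (0:ℝ) 1, w x * (μ x - lam x) ^ 2}

/-- `c*(μ) = sSup (guaranteedLosses μ ε)`. -/
noncomputable def guaranteedLosses (μ : ℝ → ℝ) (ε : ℝ) : Set ℝ :=
  {c : ℝ | ∃ w : ℝ → ℝ, Measurable w ∧ (∀ x ∈ Icc (0:ℝ) 1, 0 ≤ w x) ∧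
    (∫ x in Icc (0:ℝ) 1, w x) = 1 ∧ c = sInf (admissibleLosses μ ε w)}

section AdmissibleLosses

variable {μ w : ℝ → ℝ} {ε : ℝ}

lemma exists_sSup_image_Icc_eq_and_ge_of_abs_sub_le
    (hμ : ∀ x ∈ Icc (0:ℝ) 1, ∀ y ∈ Icc (0:ℝ) 1, |μ x - μ y| ≤ |x - y|) :
    ∃ x₀ ∈ Icc (0:ℝ) 1, sSup (μ '' Icc (0:ℝ) 1) = μ x₀ ∧ ∀ y ∈ Icc (0:ℝ) 1, μ y ≤ μ x₀ :=
  isCompact_Icc.exists_sSup_image_eq_and_ge (nonempty_Icc.2 zero_le_one)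
    (lipschitzOnWith_one_of_abs_sub_le hμ).continuousOn

lemma Ioi_subset_admissibleLosses
    (hμ : ∀ x ∈ Icc (0:ℝ) 1, ∀ y ∈ Icc (0:ℝ) 1, |μ x - μ y| ≤ |x - y|)
    (hw : ∫ x in Icc (0:ℝ) 1, w x = 1) : Ioi (ε ^ 2) ⊆ admissibleLosses μ ε w := by
  intro d hd
  obtain ⟨x₀, hx₀, hsup, hmax⟩ := exists_sSup_image_Icc_eq_and_ge_of_abs_sub_le hμ
  set c := √d
  have hεc : ε < c := (le_abs_self ε).trans_lt (Real.lt_sqrt_of_sq_lt (by rwa [sq_abs]))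
  have hshift : sSup ((fun x => μ x - c) '' Icc (0:ℝ) 1) = μ x₀ - c :=
    IsGreatest.csSup_eq ⟨⟨x₀, hx₀, rfl⟩, by
      rintro _ ⟨x, hx, rfl⟩
      exact sub_le_sub_right (hmax x hx) c⟩
  refine ⟨fun x => μ x - c, fun x hx y hy => by simpa using hμ x hx y hy, ?_, ?_⟩
  · rw [hsup, hshift]
    linarith
  · simp_rw [sub_sub_cancel, integral_mul_const, hw, one_mul]
    exact (Real.sq_sqrt ((sq_nonneg ε).trans (le_of_lt hd))).symm

lemma sInf_admissibleLosses_le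
    (hμ : ∀ x ∈ Icc (0:ℝ) 1, ∀ y ∈ Icc (0:ℝ) 1, |μ x - μ y| ≤ |x - y|)
    (hw₀ : ∀ x ∈ Icc (0:ℝ) 1, 0 ≤ w x) (hw : ∫ x in Icc (0:ℝ) 1, w x = 1) :
    sInf (admissibleLosses μ ε w) ≤ ε ^ 2 := by
  have hbdd : BddBelow (admissibleLosses μ ε w) := by
    refine ⟨0, ?_⟩
    rintro _ ⟨lam, -, -, rfl⟩
    exact setIntegral_nonneg measurableSet_Icc fun x hx => mul_nonneg (hw₀ x hx) (sq_nonneg _)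
  calc sInf (admissibleLosses μ ε w) ≤ sInf (Ioi (ε ^ 2)) :=
        csInf_le_csInf hbdd nonempty_Ioi (Ioi_subset_admissibleLosses hμ hw)
    _ = ε ^ 2 := csInf_Ioi

lemma exists_density_le_sInf_admissibleLosses {δ : ℝ}
    (hμ : ∀ x ∈ Icc (0:ℝ) 1, ∀ y ∈ Icc (0:ℝ) 1, |μ x - μ y| ≤ |x - y|)
    (hδ₀ : 0 < δ) (hδε : δ ≤ ε) (hδ₁ : δ ≤ 1) :
    ∃ w : ℝ → ℝ, Measurable w ∧ (∀ x ∈ Icc (0:ℝ) 1, 0 ≤ w x) ∧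
      ∫ x in Icc (0:ℝ) 1, w x = 1 ∧ (ε - δ) ^ 2 ≤ sInf (admissibleLosses μ ε w) := by
  obtain ⟨x₀, hx₀, hsup, -⟩ := exists_sSup_image_Icc_eq_and_ge_of_abs_sub_le hμ
  obtain ⟨a, hI, hx₀I⟩ := exists_Icc_add_subset_Icc_mem hx₀ hδ₀.le (by simpa using hδ₁)
  have hvol₀ : volume (Icc a (a + δ)) ≠ 0 := by simpa using hδ₀
  have hvol₁ : volume (Icc a (a + δ)) ≠ ∞ := measure_Icc_lt_top.ne
  have hw := setIntegral_uniformDensity measurableSet_Icc hI hvol₀ hvol₁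
  refine ⟨uniformDensity volume (Icc a (a + δ)), measurable_uniformDensity measurableSet_Icc,
    fun x _ => uniformDensity_nonneg x, hw, ?_⟩
  refine le_csInf ⟨_, Ioi_subset_admissibleLosses hμ hw (lt_add_one (ε ^ 2))⟩ ?_
  rintro _ ⟨lam, hlam, hgap, rfl⟩
  have hlamc := (lipschitzOnWith_one_of_abs_sub_le hlam).continuousOn
  have hμc := (lipschitzOnWith_one_of_abs_sub_le hμ).continuousOn
  refine le_setIntegral_uniformDensity_mul measurableSet_Icc hI hvol₀ hvol₁
    (((hμc.sub hlamc).pow 2).mono hI |>.integrableOn_Icc) fun x hx => ?_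
  have hlamx : lam x ≤ sSup (lam '' Icc (0:ℝ) 1) :=
    le_csSup (isCompact_Icc.bddAbove_image hlamc) (mem_image_of_mem lam (hI hx))
  have hdist : |x - x₀| ≤ δ := by
    simpa [← Real.dist_eq] using Real.dist_le_of_mem_Icc hx hx₀I
  have hμx : μ x₀ - δ ≤ μ x := by
    linarith [(abs_le.mp ((hμ x (hI hx) x₀ hx₀).trans hdist)).1]
  exact pow_le_pow_left₀ (by linarith) (by linarith) 2

end AdmissibleLosses

/-- for a 1-Lipschitz `μ : [0,1] → ℝ` and `ε > 0`, the value
`c*(μ) = sup_{w ∈ W} inf_{λ : max μ − max λ > ε} ∫₀¹ w(x)(μ(x) − λ(x))² dx`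
equals `ε²`, where `W` is the set of sampling densities on `[0,1]` and the infimum runs
over 1-Lipschitz functions `λ`. -/
theorem stmt_0 (μ : ℝ → ℝ)
    (hμ : ∀ x ∈ Set.Icc (0:ℝ) 1, ∀ y ∈ Set.Icc (0:ℝ) 1, |μ x - μ y| ≤ |x - y|)
    (ε : ℝ) (hε : 0 < ε) :
    sSup {c : ℝ | ∃ w : ℝ → ℝ, Measurable w ∧ (∀ x ∈ Set.Icc (0:ℝ) 1, 0 ≤ w x) ∧
        (∫ x in Set.Icc (0:ℝ) 1, w x) = 1 ∧
        c = sInf {d : ℝ | ∃ lam : ℝ → ℝ,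
          (∀ x ∈ Set.Icc (0:ℝ) 1, ∀ y ∈ Set.Icc (0:ℝ) 1, |lam x - lam y| ≤ |x - y|) ∧
          sSup (μ '' Set.Icc (0:ℝ) 1) - sSup (lam '' Set.Icc (0:ℝ) 1) > ε ∧
          d = ∫ x in Set.Icc (0:ℝ) 1, w x * (μ x - lam x) ^ 2}} = ε ^ 2 := by
  change sSup (guaranteedLosses μ ε) = ε ^ 2
  have hub : ∀ c ∈ guaranteedLosses μ ε, c ≤ ε ^ 2 := by
    rintro _ ⟨w, -, hw₀, hw, rfl⟩
    exact sInf_admissibleLosses_le hμ hw₀ hw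
  have hlim : Tendsto (fun δ : ℝ => (ε - δ) ^ 2) (𝓝[>] 0) (𝓝 (ε ^ 2)) :=
    ((by fun_prop : Continuous fun δ : ℝ => (ε - δ) ^ 2).tendsto' 0 _ (by simp)).mono_left
      nhdsWithin_le_nhds
  refine le_antisymm (Real.sSup_le hub (sq_nonneg ε)) (le_of_tendsto hlim ?_)
  filter_upwards [Ioo_mem_nhdsGT (lt_min hε one_pos)] with δ ⟨hδ₀, hδ⟩
  obtain ⟨w, hwm, hw₀, hw, hle⟩ := exists_density_le_sInf_admissibleLosses hμ hδ₀
    (hδ.le.trans (min_le_left _ _)) (hδ.le.trans (min_le_right _ _))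
  exact hle.trans (le_csSup ⟨ε ^ 2, hub⟩ ⟨w, hwm, hw₀, hw, rfl⟩)
end

section
/- Let v : [0,1] → ℝ be 1-Lipschitz and nonnegative, let D ∈ ℕ with D ≥ 2, and for t = 1, …, D set B_t = v^{-1}((2^{-t}, 2^{-(t-1)}]). Assume that B_{D−1} ∪ B_D is a union of at most two intervals, each of Lebesgue measure at least 2^{-D}. Then for every r with 2^{-D} ≤ r ≤ 2^{-(D-1)}, there exist n ∈ ℕ and sets U_1, …, U_n ⊆ ℝ, each of diameter at most r, such that v^{-1}((r, 2r]) ⊆ U_1 ∪ ⋯ ∪ U_n and n ≤ 32 · 4^{-D} · Σ_{t=1}^{D} 8^t m(B_t). -/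
/-!
For `2^{-D} ≤ r ≤ 2^{1-D}` the values in `(r, 2r]` lie in `(2^{-D}, 2^{2-D}]`, so the level set
lies in `B_{D-1} ∪ B_D = I ∪ J`. A bounded interval has measure equal to its length `ℓ`, and when
`ℓ ≥ r/2` it is covered by `⌊ℓ/r⌋ + 1 ≤ 2ℓ/r` intervals of length `r`. Since `I` and `J` have
measure at most `m(B_{D-1}) + m(B_D)` and `1/r ≤ 2^D`, at most `4 · 2^D (m(B_{D-1}) + m(B_D))`
sets are needed, and this is bounded by the terms `t = D - 1, D` of `32 · 4^{-D} Σ 8^t m(B_t)`.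
-/

open MeasureTheory Set
open scoped ENNReal

def CoverableBy {α : Type*} [PseudoEMetricSpace α] (S : Set α) (ε : ℝ≥0∞) (n : ℕ) : Prop :=
  ∃ U : Fin n → Set α, (∀ i, Metric.ediam (U i) ≤ ε) ∧ S ⊆ ⋃ i, U i

namespace CoverableBy

variable {α : Type*} [PseudoEMetricSpace α] {S T : Set α} {ε : ℝ≥0∞} {m n : ℕ}

theorem mono_set (hST : S ⊆ T) (hT : CoverableBy T ε n) : CoverableBy S ε n :=
  let ⟨U, hU, hcov⟩ := hT
  ⟨U, hU, hST.trans hcov⟩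

theorem union (hS : CoverableBy S ε m) (hT : CoverableBy T ε n) :
    CoverableBy (S ∪ T) ε (m + n) := by
  obtain ⟨U, hU, hSU⟩ := hS
  obtain ⟨V, hV, hTV⟩ := hT
  refine ⟨Fin.append U V, Fin.addCases (by simpa using hU) (by simpa using hV), ?_⟩
  rintro x (hx | hx)
  · obtain ⟨i, hi⟩ := mem_iUnion.mp (hSU hx)
    exact mem_iUnion.mpr ⟨Fin.castAdd n i, by simpa using hi⟩
  · obtain ⟨i, hi⟩ := mem_iUnion.mp (hTV hx)
    exact mem_iUnion.mpr ⟨Fin.natAdd m i, by simpa using hi⟩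

end CoverableBy

theorem coverableBy_Icc {a b r : ℝ} (hr : 0 < r) {n : ℕ} (hn : b - a < n * r) :
    CoverableBy (Icc a b) (ENNReal.ofReal r) n := by
  refine ⟨fun i ↦ Icc (a + i * r) (a + i * r + r), fun i ↦ by simp, fun x hx ↦ ?_⟩
  have hq : 0 ≤ (x - a) / r := div_nonneg (by linarith [hx.1]) hr.le
  have hk : ⌊(x - a) / r⌋₊ < n := by
    rw [Nat.floor_lt hq, div_lt_iff₀ hr]
    linarith [hx.2]
  have hlo := (le_div_iff₀ hr).mp (Nat.floor_le hq)
  have hhi := (div_lt_iff₀ hr).mp (Nat.lt_floor_add_one ((x - a) / r))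
  exact mem_iUnion.mpr ⟨⟨_, hk⟩, by simp only; constructor <;> linarith⟩

theorem Real.coverableBy_of_diam_lt {S : Set ℝ} (hS : Bornology.IsBounded S) {r : ℝ}
    (hr : 0 < r) {n : ℕ} (hn : Metric.diam S < n * r) : CoverableBy S (ENNReal.ofReal r) n := by
  rw [Real.diam_eq hS] at hn
  exact (coverableBy_Icc hr hn).mono_set hS.subset_Icc_sInf_sSup

theorem Set.OrdConnected.volume_eq_ediam {S : Set ℝ} (hS : S.OrdConnected)
    (hb : Bornology.IsBounded S) : volume S = Metric.ediam S := by
  refine le_antisymm (Real.volume_le_diam S) ?_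
  rcases S.eq_empty_or_nonempty with rfl | hne
  · simp
  rw [Real.ediam_eq hb, ← Real.volume_Ioo]
  exact measure_mono (IsConnected.Ioo_csInf_csSup_subset ⟨hne, hS.isPreconnected⟩
    hb.bddBelow hb.bddAbove)

theorem Set.OrdConnected.exists_coverableBy {S : Set ℝ} (hS : S.OrdConnected)
    (hb : Bornology.IsBounded S) {r : ℝ} (hr : 0 < r) (hrS : r ≤ 2 * volume.real S) :
    ∃ n : ℕ, CoverableBy S (ENNReal.ofReal r) n ∧ (n : ℝ) ≤ 2 * volume.real S / r := by
  have hdiam : Metric.diam S = volume.real S := by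
    rw [Measure.real, hS.volume_eq_ediam hb]; rfl
  refine ⟨⌊volume.real S / r⌋₊ + 1, Real.coverableBy_of_diam_lt hb hr ?_, ?_⟩
  · rw [hdiam, ← div_lt_iff₀ hr]
    exact_mod_cast Nat.lt_floor_add_one _
  -- `⌊x⌋₊ + 1 ≤ 2 x` as soon as `x ≥ 1/2`
  · have hq : 1 / 2 ≤ volume.real S / r := by rw [le_div_iff₀ hr]; linarith
    push_cast
    rw [mul_div_assoc]
    rcases lt_or_ge (volume.real S / r) 1 with h | h
    · rw [Nat.floor_eq_zero.mpr h]; linarith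
    · linarith [Nat.floor_le (zero_le_one.trans h)]

theorem Set.OrdConnected.exists_coverableBy_of_subset {K T : Set ℝ} (hK : K.OrdConnected)
    (hKT : K ⊆ T) (hT : Bornology.IsBounded T) {a r : ℝ} (ha : 0 < a) (har : a ≤ r)
    (hra : r ≤ 2 * a) (hKa : ENNReal.ofReal a ≤ volume K) :
    ∃ n : ℕ, CoverableBy K (ENNReal.ofReal r) n ∧ (n : ℝ) ≤ 2 * volume.real T / a := by
  have hTfin : volume T ≠ ⊤ := hT.measure_lt_top.ne
  have haK : a ≤ volume.real K :=
    (ENNReal.ofReal_le_iff_le_toReal (measure_ne_top_of_subset hKT hTfin)).mp hKa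
  obtain ⟨n, hcov, hn⟩ := hK.exists_coverableBy (hT.subset hKT) (ha.trans_le har) (by linarith)
  refine ⟨n, hcov, hn.trans ?_⟩
  gcongr

theorem Ioc_subset_Ioc_two_zpow_union {D : ℕ} (hD : 1 ≤ D) {r : ℝ}
    (hr : (2:ℝ) ^ (-(D:ℤ)) ≤ r) (hr' : r ≤ (2:ℝ) ^ (-(D:ℤ) + 1)) :
    Ioc r (2 * r) ⊆ Ioc ((2:ℝ) ^ (-((D - 1 : ℕ) : ℤ))) ((2:ℝ) ^ (-((D - 1 : ℕ) : ℤ) + 1)) ∪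
      Ioc ((2:ℝ) ^ (-(D:ℤ))) ((2:ℝ) ^ (-(D:ℤ) + 1)) := by
  have ha : (0:ℝ) < 2 ^ (-(D:ℤ)) := by positivity
  rw [show -((D - 1 : ℕ) : ℤ) = -(D:ℤ) + 1 by omega, union_comm]
  simp only [zpow_add_one₀ (two_ne_zero' ℝ)] at hr' ⊢
  rw [Ioc_union_Ioc_eq_Ioc (by linarith) (by linarith)]
  exact Ioc_subset_Ioc hr (by linarith)

theorem four_mul_add_div_two_zpow_le_sum {D : ℕ} (hD : 2 ≤ D) {f : ℕ → ℝ} (hf : ∀ t, 0 ≤ f t) :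
    4 * (f (D - 1) + f D) / (2:ℝ) ^ (-(D:ℤ)) ≤
      32 * (4:ℝ) ^ (-(D:ℤ)) * ∑ t ∈ Finset.Icc 1 D, 8 ^ t * f t := by
  rw [zpow_neg, div_inv_eq_mul, zpow_natCast]
  obtain ⟨k, rfl⟩ : ∃ k, D = k + 1 := ⟨D - 1, by omega⟩
  set c := (4:ℝ) ^ (-((k + 1 : ℕ) : ℤ)) with hc_def
  have hc : c * 4 ^ (k + 1) = 1 := by
    rw [hc_def, zpow_neg, zpow_natCast, inv_mul_cancel₀ (by positivity)]
  have hck : 32 * c * 8 ^ k = 4 * 2 ^ (k + 1) := by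
    rw [show (8:ℝ) ^ k = 4 ^ k * 2 ^ k by rw [← mul_pow]; norm_num]
    linear_combination (8 * 2 ^ k : ℝ) * hc
  have hpair : ({k, k + 1} : Finset ℕ) ⊆ Finset.Icc 1 (k + 1) := by
    intro t ht
    simp only [Finset.mem_insert, Finset.mem_singleton] at ht
    simp only [Finset.mem_Icc]
    omega
  calc 4 * (f (k + 1 - 1) + f (k + 1)) * 2 ^ (k + 1)
      ≤ 32 * c * 8 ^ k * f k + 8 * (32 * c * 8 ^ k) * f (k + 1) := by
        rw [hck, Nat.add_sub_cancel]
        nlinarith [hf (k + 1), pow_pos (two_pos (α := ℝ)) (k + 1)]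
    _ = 32 * c * ∑ t ∈ {k, k + 1}, 8 ^ t * f t := by
        rw [Finset.sum_pair (by omega)]
        ring
    _ ≤ 32 * c * ∑ t ∈ Finset.Icc 1 (k + 1), 8 ^ t * f t := by
        gcongr ?_ * ?_
        exact Finset.sum_le_sum_of_subset_of_nonneg hpair fun t _ _ ↦
          mul_nonneg (by positivity) (hf t)

theorem stmt_5_general (v : ℝ → ℝ)
    (D : ℕ) (hD : 2 ≤ D)
    (B : ℕ → Set ℝ)
    (hB : ∀ t : ℕ, B t =
      {x ∈ Set.Icc (0:ℝ) 1 | v x ∈ Set.Ioc ((2:ℝ) ^ (-(t:ℤ))) ((2:ℝ) ^ (-(t:ℤ) + 1))})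
    (htwo : ∃ I J : Set ℝ, I.OrdConnected ∧ J.OrdConnected ∧
      B (D - 1) ∪ B D = I ∪ J ∧
      ENNReal.ofReal ((2:ℝ) ^ (-(D:ℤ))) ≤ volume I ∧
      ENNReal.ofReal ((2:ℝ) ^ (-(D:ℤ))) ≤ volume J) :
    ∀ r : ℝ, (2:ℝ) ^ (-(D:ℤ)) ≤ r → r ≤ (2:ℝ) ^ (-(D:ℤ) + 1) →
      ∃ (n : ℕ) (U : Fin n → Set ℝ),
        (∀ i, EMetric.diam (U i) ≤ ENNReal.ofReal r) ∧
        {x ∈ Set.Icc (0:ℝ) 1 | v x ∈ Set.Ioc r (2 * r)} ⊆ ⋃ i, U i ∧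
        (n : ℝ) ≤ 32 * (4:ℝ) ^ (-(D:ℤ)) *
          ∑ t ∈ Finset.Icc 1 D, 8 ^ t * (volume (B t)).toReal := by
  intro r hr hr'
  obtain ⟨I, J, hI, hJ, hIJ, hmI, hmJ⟩ := htwo
  have hlevel : {x ∈ Icc 0 1 | v x ∈ Ioc r (2 * r)} ⊆ B (D - 1) ∪ B D := by
    rw [hB, hB]
    rintro x ⟨hx, hvx⟩
    exact (Ioc_subset_Ioc_two_zpow_union (by omega) hr hr' hvx).imp (⟨hx, ·⟩) (⟨hx, ·⟩)
  have hbdd : Bornology.IsBounded (B (D - 1) ∪ B D) := by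
    rw [hB, hB]
    exact (Metric.isBounded_Icc (0:ℝ) 1).subset (union_subset (sep_subset _ _) (sep_subset _ _))
  have ha : (0:ℝ) < 2 ^ (-(D:ℤ)) := by positivity
  have hr'' : r ≤ 2 * 2 ^ (-(D:ℤ)) := by rwa [zpow_add_one₀ two_ne_zero, mul_comm] at hr'
  obtain ⟨m, hIcov, hm⟩ :=
    hI.exists_coverableBy_of_subset (hIJ ▸ subset_union_left) hbdd ha hr hr'' hmI
  obtain ⟨n, hJcov, hn⟩ :=
    hJ.exists_coverableBy_of_subset (hIJ ▸ subset_union_right) hbdd ha hr hr'' hmJ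
  obtain ⟨U, hU, hcov⟩ := (hIcov.union hJcov).mono_set (hIJ ▸ hlevel)
  refine ⟨m + n, U, hU, hcov, ?_⟩
  calc ((m + n : ℕ) : ℝ)
      ≤ 2 * volume.real (B (D - 1) ∪ B D) / 2 ^ (-(D:ℤ)) +
          2 * volume.real (B (D - 1) ∪ B D) / 2 ^ (-(D:ℤ)) := by
        push_cast
        exact add_le_add hm hn
    _ = 4 * volume.real (B (D - 1) ∪ B D) / 2 ^ (-(D:ℤ)) := by ring
    _ ≤ 4 * (volume.real (B (D - 1)) + volume.real (B D)) / 2 ^ (-(D:ℤ)) := by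
        gcongr
        exact measureReal_union_le _ _
    _ ≤ _ := four_mul_add_div_two_zpow_le_sum hD fun _ ↦ measureReal_nonneg

/-- covering-number estimate underlying Corollary 2 of the paper.  If
`B_{D-1} ∪ B_D` is a union of at most two intervals, each of measure at least `2^{-D}`,
then for every `2^{-D} ≤ r ≤ 2^{-(D-1)}` the level set `v⁻¹((r, 2r])` can be covered by
`n ≤ 32 · 4^{-D} Σ_{t=1}^D 8^t m(B_t)` sets of diameter at most `r`. -/
theorem stmt_5 (v : ℝ → ℝ)
    (hv : ∀ x ∈ Set.Icc (0:ℝ) 1, ∀ y ∈ Set.Icc (0:ℝ) 1, |v x - v y| ≤ |x - y|)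
    (hvpos : ∀ x ∈ Set.Icc (0:ℝ) 1, 0 ≤ v x)
    (D : ℕ) (hD : 2 ≤ D)
    (B : ℕ → Set ℝ)
    (hB : ∀ t : ℕ, B t =
      {x ∈ Set.Icc (0:ℝ) 1 | v x ∈ Set.Ioc ((2:ℝ) ^ (-(t:ℤ))) ((2:ℝ) ^ (-(t:ℤ) + 1))})
    (htwo : ∃ I J : Set ℝ, I.OrdConnected ∧ J.OrdConnected ∧
      B (D - 1) ∪ B D = I ∪ J ∧
      ENNReal.ofReal ((2:ℝ) ^ (-(D:ℤ))) ≤ volume I ∧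
      ENNReal.ofReal ((2:ℝ) ^ (-(D:ℤ))) ≤ volume J) :
    ∀ r : ℝ, (2:ℝ) ^ (-(D:ℤ)) ≤ r → r ≤ (2:ℝ) ^ (-(D:ℤ) + 1) →
      ∃ (n : ℕ) (U : Fin n → Set ℝ),
        (∀ i, EMetric.diam (U i) ≤ ENNReal.ofReal r) ∧
        {x ∈ Set.Icc (0:ℝ) 1 | v x ∈ Set.Ioc r (2 * r)} ⊆ ⋃ i, U i ∧
        (n : ℝ) ≤ 32 * (4:ℝ) ^ (-(D:ℤ)) *
          ∑ t ∈ Finset.Icc 1 D, 8 ^ t * (volume (B t)).toReal :=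
  stmt_5_general v D hD B hB htwo
end

section
/- Let L > 0, t ∈ ℕ, let v : [0,1] → ℝ be L-Lipschitz, let H ⊆ [0,1] be a finite nonempty set, and let v̂ : H → ℝ satisfy |v̂(h) − v(h)| ≤ 1/2^{t+4} for all h ∈ H. Let a* ∈ H satisfy v̂(a*) ≤ v̂(h) for all h ∈ H. If h ∈ H satisfies v̂(h) − v̂(a*) > 12/2^{t+4}, then every x ∈ [0,1] with |x − h| ≤ 1/(L·2^{t+4}) satisfies v(x) − v(a*) > 9/2^{t+4}. -/
/-- soundness of the elimination rule of the Reject-and-Refine algorithm.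
If all confidence intervals of half-width `1/2^{t+4}` are correct and
`v̂(h) − v̂(a*) > 12/2^{t+4}`, then every `x` with `|x − h| ≤ 1/(L·2^{t+4})` satisfies
`v(x) − v(a*) > 9/2^{t+4}`. -/
theorem stmt_12 (L : ℝ) (hL : 0 < L) (t : ℕ) (v : ℝ → ℝ)
    (hv : ∀ x ∈ Set.Icc (0:ℝ) 1, ∀ y ∈ Set.Icc (0:ℝ) 1, |v x - v y| ≤ L * |x - y|)
    (H : Set ℝ) (hHsub : H ⊆ Set.Icc (0:ℝ) 1) (hHfin : H.Finite) (hHne : H.Nonempty)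
    (vhat : ℝ → ℝ) (hconf : ∀ h ∈ H, |vhat h - v h| ≤ 1 / 2 ^ (t + 4))
    (astar : ℝ) (hastar : astar ∈ H) (hmin : ∀ h ∈ H, vhat astar ≤ vhat h)
    (h : ℝ) (hhH : h ∈ H) (helim : vhat h - vhat astar > 12 / 2 ^ (t + 4)) :
    ∀ x ∈ Set.Icc (0:ℝ) 1, |x - h| ≤ 1 / (L * 2 ^ (t + 4)) →
      v x - v astar > 9 / 2 ^ (t + 4) := by
  intro x hx hxd
  have hpow : (0:ℝ) < 2 ^ (t + 4) := by positivity
  have hlip : |v x - v h| ≤ 1 / 2 ^ (t + 4) := by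
    calc |v x - v h| ≤ L * |x - h| := hv x hx h (hHsub hhH)
    _ ≤ L * (1 / (L * 2 ^ (t + 4))) := by
        exact mul_le_mul_of_nonneg_left hxd hL.le
    _ = 1 / 2 ^ (t + 4) := by field_simp
  have h1 := abs_le.mp (hconf h hhH)
  have h2 := abs_le.mp (hconf astar hastar)
  have h3 := abs_le.mp hlip
  cases h1 with | intro a b => cases h2 with | intro c d => cases h3 with
  | intro e f =>
    have e12 : (12:ℝ) / 2 ^ (t + 4) = 12 * (1 / 2 ^ (t + 4)) := by ring
    have e9 : (9:ℝ) / 2 ^ (t + 4) = 9 * (1 / 2 ^ (t + 4)) := by ring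
    linarith
end

section
/- Let L > 0, t ∈ ℕ, let v : [0,1] → ℝ be L-Lipschitz with inf_{x ∈ [0,1]} v(x) = 0 attained at some point of [0,1], let H ⊆ [0,1] be a finite nonempty set such that for every y ∈ [0,1] there is h ∈ H with |y − h| ≤ 1/(L·2^{t+4}), and let v̂ : H → ℝ satisfy |v̂(h) − v(h)| ≤ 1/2^{t+4} for all h ∈ H. Let a* ∈ H satisfy v̂(a*) ≤ v̂(h) for all h ∈ H. Then for every x ∈ [0,1] with v(x) > 2^{-t}, there exists h ∈ H with |x − h| ≤ 1/(L·2^{t+4}) and v̂(h) − v̂(a*) > 12/2^{t+4}. -/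
/-- completeness of the elimination rule of the Reject-and-Refine algorithm.
If `inf v = 0` is attained, `H` is a `1/(L·2^{t+4})`-net of `[0,1]`, and all confidence
intervals of half-width `1/2^{t+4}` are correct, then every `x` with `v(x) > 2^{-t}` has a
grid point `h` near it with `v̂(h) − v̂(a*) > 12/2^{t+4}`. -/
theorem stmt_13 (L : ℝ) (hL : 0 < L) (t : ℕ) (v : ℝ → ℝ)
    (hv : ∀ x ∈ Set.Icc (0:ℝ) 1, ∀ y ∈ Set.Icc (0:ℝ) 1, |v x - v y| ≤ L * |x - y|)
    (hinf : sInf (v '' Set.Icc (0:ℝ) 1) = 0)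
    (hattain : ∃ x ∈ Set.Icc (0:ℝ) 1, v x = 0)
    (H : Set ℝ) (hHsub : H ⊆ Set.Icc (0:ℝ) 1) (hHfin : H.Finite) (hHne : H.Nonempty)
    (hnet : ∀ y ∈ Set.Icc (0:ℝ) 1, ∃ h ∈ H, |y - h| ≤ 1 / (L * 2 ^ (t + 4)))
    (vhat : ℝ → ℝ) (hconf : ∀ h ∈ H, |vhat h - v h| ≤ 1 / 2 ^ (t + 4))
    (astar : ℝ) (hastar : astar ∈ H) (hmin : ∀ h ∈ H, vhat astar ≤ vhat h) :
    ∀ x ∈ Set.Icc (0:ℝ) 1, v x > (2:ℝ) ^ (-(t:ℤ)) →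
      ∃ h ∈ H, |x - h| ≤ 1 / (L * 2 ^ (t + 4)) ∧
        vhat h - vhat astar > 12 / 2 ^ (t + 4) := by

  intro x hx hvx
  obtain ⟨h, hH, hxh⟩ := hnet x hx
  obtain ⟨x0, hx0, hvx0⟩ := hattain
  obtain ⟨h0, hH0, hx0h0⟩ := hnet x0 hx0
  have hpow : (0:ℝ) < 2 ^ (t + 4) := by positivity
  have hLxh : L * |x - h| ≤ 1 / 2 ^ (t + 4) := by
    calc L * |x - h| ≤ L * (1 / (L * 2 ^ (t + 4))) := by
          exact mul_le_mul_of_nonneg_left hxh hL.le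
      _ = 1 / 2 ^ (t + 4) := by field_simp
  have hLx0 : L * |x0 - h0| ≤ 1 / 2 ^ (t + 4) := by
    calc L * |x0 - h0| ≤ L * (1 / (L * 2 ^ (t + 4))) := by
          exact mul_le_mul_of_nonneg_left hx0h0 hL.le
      _ = 1 / 2 ^ (t + 4) := by field_simp
  -- v h is large
  have h1 : |v x - v h| ≤ L * |x - h| := hv x hx h (hHsub hH)
  have h2 : |v x0 - v h0| ≤ L * |x0 - h0| := hv x0 hx0 h0 (hHsub hH0)
  have hc : |vhat h - v h| ≤ 1 / 2 ^ (t + 4) := hconf h hH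
  have hc0 : |vhat h0 - v h0| ≤ 1 / 2 ^ (t + 4) := hconf h0 hH0
  have h2t : (2:ℝ) ^ (-(t:ℤ)) = 16 / 2 ^ (t + 4) := by
    rw [zpow_neg, zpow_natCast]
    rw [pow_add]
    field_simp
    ring
  have hmin' : vhat astar ≤ vhat h0 := hmin h0 hH0
  refine ⟨h, hH, hxh, ?_⟩
  have e1 := abs_le.mp h1
  have e2 := abs_le.mp h2
  have e3 := abs_le.mp hc
  have e4 := abs_le.mp hc0
  rw [h2t] at hvx
  have r1 : (16:ℝ) / 2 ^ (t + 4) = 16 * (1 / 2 ^ (t + 4)) := by ring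
  have r2 : (12:ℝ) / 2 ^ (t + 4) = 12 * (1 / 2 ^ (t + 4)) := by ring
  rw [r2]
  rw [r1] at hvx
  linarith [e1.1, e1.2, e2.1, e2.2, e3.1, e3.2, e4.1, e4.2]
end

section
/- Let n ≥ 1, let V and O be Hermitian n × n complex matrices, and let ρ be a positive semidefinite n × n complex matrix with Tr(ρ) = 1. Then the function f : ℝ → ℂ defined by f(x) = Tr( exp(−i x V) · ρ · exp(i x V) · O ) is Lipschitz with constant 2‖V‖_F ‖O‖_F, i.e., |f(x) − f(y)| ≤ 2‖V‖_F ‖O‖_F |x − y| for all x, y ∈ ℝ, where ‖·‖_F denotes the Frobenius norm and exp is the matrix exponential. -/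
/-!
Write `U t = exp (-i t V)` and `σ t = U t * ρ * (U t)ᴴ`, so that `σ' = -i (V σ - σ V)`. Since `V` is
Hermitian, `U t` is unitary, and the Frobenius norm is unitarily invariant, so
`‖σ t‖_F = ‖ρ‖_F ≤ Tr ρ = 1` (for a positive semidefinite matrix, `‖ρ‖_F` is the `ℓ²` norm of its
eigenvalues, which is at most their `ℓ¹` norm). Cauchy–Schwarz for the Frobenius inner product
bounds the derivative of `Tr (σ t * O)` by `2 ‖V‖_F ‖σ t‖_F ‖O‖_F`, and the mean value inequality
concludes.
-/

open Matrix
open scoped ComplexOrder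

/-- The Frobenius norm of a complex matrix. -/
noncomputable def frobNorm {n : ℕ} (A : Matrix (Fin n) (Fin n) ℂ) : ℝ :=
  Real.sqrt (∑ i, ∑ j, ‖A i j‖ ^ 2)

theorem hasDerivAt_exp_smul_mul_mul_exp_smul {𝔸 : Type*} [NormedRing 𝔸] [NormedAlgebra ℝ 𝔸]
    [CompleteSpace 𝔸] (a b c : 𝔸) (t : ℝ) :
    HasDerivAt (fun u : ℝ => NormedSpace.exp (u • a) * b * NormedSpace.exp (u • c))
      (a * (NormedSpace.exp (t • a) * b * NormedSpace.exp (t • c)) +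
        NormedSpace.exp (t • a) * b * NormedSpace.exp (t • c) * c) t := by
  refine (((hasDerivAt_exp_smul_const' a t).mul_const b).mul
    (hasDerivAt_exp_smul_const c t)).congr_deriv ?_
  simp only [mul_assoc]

section Frobenius

attribute [local instance] Matrix.frobeniusSeminormedAddCommGroup
  Matrix.frobeniusNormedAddCommGroup Matrix.frobeniusNormedSpace Matrix.frobeniusNormedRing
  Matrix.frobeniusNormedAlgebra

variable {𝕜 : Type*} [RCLike 𝕜] {m n : Type*} [Fintype m] [Fintype n]

theorem Matrix.frobenius_norm_sq_eq_re_trace (A : Matrix m n 𝕜) :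
    ‖A‖ ^ 2 = RCLike.re (Aᴴ * A).trace := by
  rw [frobenius_norm_def, ← Real.rpow_natCast, ← Real.rpow_mul (by positivity)]
  norm_num only [Real.rpow_one]
  rw [Finset.sum_comm]
  simp only [trace, diag, mul_apply, conjTranspose_apply, map_sum, RCLike.star_def, RCLike.conj_mul]
  norm_cast

theorem Matrix.frobenius_norm_eq_sqrt (A : Matrix m n 𝕜) :
    ‖A‖ = √(∑ p : m × n, ‖A p.1 p.2‖ ^ 2) := by
  rw [frobenius_norm_def, Real.sqrt_eq_rpow, Fintype.sum_prod_type]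
  simp only [Real.rpow_two]

theorem Matrix.frobenius_norm_trace_mul_le (A : Matrix m n 𝕜) (B : Matrix n m 𝕜) :
    ‖(A * B).trace‖ ≤ ‖A‖ * ‖B‖ := by
  calc ‖(A * B).trace‖ = ‖∑ p : m × n, A p.1 p.2 * Bᵀ p.1 p.2‖ := by
        rw [Fintype.sum_prod_type]; rfl
    _ ≤ ∑ p : m × n, ‖A p.1 p.2‖ * ‖Bᵀ p.1 p.2‖ :=
        (norm_sum_le _ _).trans_eq (by simp only [norm_mul])
    _ ≤ ‖A‖ * ‖Bᵀ‖ := by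
        rw [frobenius_norm_eq_sqrt, frobenius_norm_eq_sqrt]
        exact Real.sum_mul_le_sqrt_mul_sqrt _ _ _
    _ = ‖A‖ * ‖B‖ := by rw [frobenius_norm_transpose]

theorem Matrix.frobenius_norm_unitary_mul [DecidableEq m] {U : Matrix m m 𝕜}
    (hU : U ∈ unitaryGroup m 𝕜) (A : Matrix m n 𝕜) : ‖U * A‖ = ‖A‖ := by
  rw [← sq_eq_sq₀ (norm_nonneg _) (norm_nonneg _), frobenius_norm_sq_eq_re_trace,
    frobenius_norm_sq_eq_re_trace, conjTranspose_mul, Matrix.mul_assoc, ← Matrix.mul_assoc Uᴴ,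
    show Uᴴ * U = 1 from Unitary.star_mul_self_of_mem hU, Matrix.one_mul]

theorem Matrix.frobenius_norm_mul_unitary [DecidableEq n] {U : Matrix n n 𝕜}
    (hU : U ∈ unitaryGroup n 𝕜) (A : Matrix m n 𝕜) : ‖A * U‖ = ‖A‖ := by
  rw [← frobenius_norm_conjTranspose, conjTranspose_mul,
    frobenius_norm_unitary_mul (U := Uᴴ) (Unitary.star_mem hU), frobenius_norm_conjTranspose]

variable [DecidableEq n]

theorem Matrix.PosSemidef.frobenius_norm_le_re_trace {A : Matrix n n 𝕜} (hA : A.PosSemidef) :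
    ‖A‖ ≤ RCLike.re A.trace := by
  have hev := hA.eigenvalues_nonneg
  rw [hA.isHermitian.trace_eq_sum_eigenvalues]
  conv_lhs => rw [hA.isHermitian.spectral_theorem, Unitary.conjStarAlgAut_apply,
    frobenius_norm_mul_unitary (Unitary.star_mem (SetLike.coe_mem _)),
    frobenius_norm_unitary_mul (SetLike.coe_mem _), frobenius_norm_diagonal, EuclideanSpace.norm_eq]
  simp only [Function.comp_apply, RCLike.norm_ofReal, abs_of_nonneg (hev _), map_sum,
    RCLike.ofReal_re]
  exact Real.sqrt_le_iff.mpr ⟨Finset.sum_nonneg fun i _ => hev i,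
    Finset.sum_sq_le_sq_sum_of_nonneg fun i _ => hev i⟩

theorem Matrix.frobenius_norm_exp_smul_mul_mul_exp_neg_smul {K : Matrix n n 𝕜}
    (hK : K ∈ skewAdjoint (Matrix n n 𝕜)) (ρ : Matrix n n 𝕜) (t : ℝ) :
    ‖NormedSpace.exp (t • K) * ρ * NormedSpace.exp (t • -K)‖ = ‖ρ‖ := by
  have hU : NormedSpace.exp (t • K) ∈ unitaryGroup n 𝕜 :=
    NormedSpace.exp_mem_unitary_of_mem_skewAdjoint (skewAdjoint.smul_mem t hK)
  have hstar : NormedSpace.exp (t • -K) = star (NormedSpace.exp (t • K)) := by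
    rw [NormedSpace.star_exp, star_smul, skewAdjoint.mem_iff.mp hK, star_trivial]
  rw [hstar, frobenius_norm_mul_unitary (Unitary.star_mem hU), frobenius_norm_unitary_mul hU]

theorem Matrix.norm_trace_exp_smul_conj_sub_le {K : Matrix n n 𝕜}
    (hK : K ∈ skewAdjoint (Matrix n n 𝕜)) (ρ O : Matrix n n 𝕜) (x y : ℝ) :
    ‖(NormedSpace.exp (x • K) * ρ * NormedSpace.exp (x • -K) * O).trace -
        (NormedSpace.exp (y • K) * ρ * NormedSpace.exp (y • -K) * O).trace‖
      ≤ 2 * ‖K‖ * ‖ρ‖ * ‖O‖ * |x - y| := by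
  set σ : ℝ → Matrix n n 𝕜 := fun t => NormedSpace.exp (t • K) * ρ * NormedSpace.exp (t • -K)
  have hderiv (t : ℝ) :
      HasDerivAt (fun u => (σ u * O).trace) (((K * σ t + σ t * -K) * O).trace) t :=
    (traceLinearMap n ℝ 𝕜).toContinuousLinearMap.hasFDerivAt.comp_hasDerivAt t
      ((hasDerivAt_exp_smul_mul_mul_exp_smul K ρ (-K) t).mul_const O)
  have hbound (t : ℝ) : ‖((K * σ t + σ t * -K) * O).trace‖ ≤ 2 * ‖K‖ * ‖ρ‖ * ‖O‖ := by
    have hσ : ‖σ t‖ = ‖ρ‖ := frobenius_norm_exp_smul_mul_mul_exp_neg_smul hK ρ t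
    calc _ ≤ ‖K * σ t + σ t * -K‖ * ‖O‖ := frobenius_norm_trace_mul_le _ _
      _ ≤ (‖K‖ * ‖σ t‖ + ‖σ t‖ * ‖-K‖) * ‖O‖ := by
          gcongr
          exact (norm_add_le _ _).trans (add_le_add (norm_mul_le _ _) (norm_mul_le _ _))
      _ = 2 * ‖K‖ * ‖ρ‖ * ‖O‖ := by rw [norm_neg, hσ]; ring
  simpa only [Real.norm_eq_abs] using Convex.norm_image_sub_le_of_norm_hasDerivWithin_le
    (fun t _ => (hderiv t).hasDerivWithinAt) (fun t _ => hbound t) convex_univ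
    (Set.mem_univ y) (Set.mem_univ x)

theorem Matrix.IsHermitian.norm_trace_exp_conj_sub_le {V : Matrix n n ℂ} (hV : V.IsHermitian)
    (ρ O : Matrix n n ℂ) (x y : ℝ) :
    ‖(NormedSpace.exp ((-(Complex.I * x)) • V) * ρ *
          NormedSpace.exp ((Complex.I * x) • V) * O).trace -
        (NormedSpace.exp ((-(Complex.I * y)) • V) * ρ *
          NormedSpace.exp ((Complex.I * y) • V) * O).trace‖
      ≤ 2 * ‖V‖ * ‖ρ‖ * ‖O‖ * |x - y| := by
  have hK : -(Complex.I • V) ∈ skewAdjoint (Matrix n n ℂ) :=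
    neg_mem (hV.isSelfAdjoint.smul_mem_skewAdjoint Complex.conj_I)
  have hsmul (t : ℝ) : (Complex.I * t) • V = t • (Complex.I • V) := by
    rw [← Complex.coe_smul, smul_smul, mul_comm]
  simpa only [neg_smul, ← smul_neg, hsmul, neg_neg, norm_neg, norm_smul, Complex.norm_I, one_mul]
    using norm_trace_exp_smul_conj_sub_le hK ρ O x y

theorem frobNorm_eq_norm {n : ℕ} (A : Matrix (Fin n) (Fin n) ℂ) : frobNorm A = ‖A‖ := by
  rw [frobNorm, frobenius_norm_def, Real.sqrt_eq_rpow]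
  simp only [Real.rpow_two]

end Frobenius

theorem stmt_16_general (n : ℕ) (V O ρ : Matrix (Fin n) (Fin n) ℂ)
    (hV : V.IsHermitian)
    (hρ : ρ.PosSemidef) (hρtr : ρ.trace = 1) :
    ∀ x y : ℝ, ‖
        ((NormedSpace.exp ((-(Complex.I * x)) • V) * ρ *
            NormedSpace.exp ((Complex.I * x) • V) * O).trace -
         (NormedSpace.exp ((-(Complex.I * y)) • V) * ρ *
            NormedSpace.exp ((Complex.I * y) • V) * O).trace)‖
      ≤ 2 * frobNorm V * frobNorm O * |x - y| := by
  intro x y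
  have hρ_le : frobNorm ρ ≤ 1 := by
    simpa only [frobNorm_eq_norm, hρtr, RCLike.one_re] using hρ.frobenius_norm_le_re_trace
  have hV_nonneg : 0 ≤ frobNorm V := Real.sqrt_nonneg _
  have hO_nonneg : 0 ≤ frobNorm O := Real.sqrt_nonneg _
  calc _ ≤ 2 * frobNorm V * frobNorm ρ * frobNorm O * |x - y| := by
        simpa only [frobNorm_eq_norm] using hV.norm_trace_exp_conj_sub_le ρ O x y
    _ ≤ 2 * frobNorm V * 1 * frobNorm O * |x - y| := by gcongr
    _ = 2 * frobNorm V * frobNorm O * |x - y| := by ring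

/-- the expected reward `μ(x) = Tr(exp(−ixV) ρ exp(ixV) O)` of a
parameterized quantum circuit with Hermitian generator `V`, Hermitian observable `O` and
state `ρ` (PSD, trace one) is Lipschitz in `x` with constant `2‖V‖_F ‖O‖_F`. -/
theorem stmt_16 (n : ℕ) (hn : 1 ≤ n) (V O ρ : Matrix (Fin n) (Fin n) ℂ)
    (hV : V.IsHermitian) (hO : O.IsHermitian)
    (hρ : ρ.PosSemidef) (hρtr : ρ.trace = 1) :
    ∀ x y : ℝ, ‖
        ((NormedSpace.exp ((-(Complex.I * x)) • V) * ρ *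
            NormedSpace.exp ((Complex.I * x) • V) * O).trace -
         (NormedSpace.exp ((-(Complex.I * y)) • V) * ρ *
            NormedSpace.exp ((Complex.I * y) • V) * O).trace)‖
      ≤ 2 * frobNorm V * frobNorm O * |x - y| :=
  stmt_16_general n V O ρ hV hρ hρtr
end
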